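/- arXiv:2312.14910 — 5 statements merged into one kernel-verified Lean document; each statement's English description precedes it below -/
import Mathlib

section
/- Let A be an n×n complex matrix, let k be a natural number, and let D : ℂ^k → ℂ^{n×n} be a ℂ-linear map. Then the deformation 𝒜(δ) = A + D(δ) of A is versal if and only if ℂ^{n×n} = T(A) + range(D), where T(A) = { XA − AX : X ∈ ℂ^{n×n} } and range(D) is the image of the linear map D. -/
open Matrix

/-- A deformation `𝒜` of an `n × n` complex matrix `A` (a holomorphic map defined near `0`
with `𝒜 0 = A`, here given on all of `ℂ^k`) is *versal* if every deformation `ℬ` of `A`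
(in any number `l` of parameters) is equivalent to a deformation induced from `𝒜`:
there are a holomorphic map `φ` with `φ 0 = 0` and a holomorphic deformation `𝓘` of the
identity matrix such that `ℬ ε = (𝓘 ε)⁻¹ * 𝒜 (φ ε) * 𝓘 ε` near `0`. -/
def IsVersal (n k : ℕ) (A : Matrix (Fin n) (Fin n) ℂ)
    (𝒜 : (Fin k → ℂ) → Matrix (Fin n) (Fin n) ℂ) : Prop :=
  ∀ (l : ℕ) (ℬ : (Fin l → ℂ) → Matrix (Fin n) (Fin n) ℂ),
    (∀ i j, AnalyticAt ℂ (fun ε => ℬ ε i j) 0) → ℬ 0 = A →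
    ∃ (φ : (Fin l → ℂ) → (Fin k → ℂ)) (𝓘 : (Fin l → ℂ) → Matrix (Fin n) (Fin n) ℂ),
      (∀ i, AnalyticAt ℂ (fun ε => φ ε i) 0) ∧ φ 0 = 0 ∧
      (∀ i j, AnalyticAt ℂ (fun ε => 𝓘 ε i j) 0) ∧ 𝓘 0 = 1 ∧
      ∀ᶠ ε in nhds 0, IsUnit (𝓘 ε) ∧ ℬ ε = (𝓘 ε)⁻¹ * 𝒜 (φ ε) * 𝓘 ε

/-! If `A + D` is versal, conjugate the one-parameter deformation `A + ε₀ B` into it and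
differentiate `𝓘(ε) ℬ(ε) = (A + D φ(ε)) 𝓘(ε)` at `ε = 0`: this writes `B` as
`A 𝓘'(0) - 𝓘'(0) A + D φ'(0)`. Conversely, if `T(A) + range D` is everything, pick a linear
splitting `Y ↦ (X Y, w Y)` of `(X, w) ↦ X A - A X - D w`. The equation
`(1 + X Y) ℬ(ε) = (A + D (w Y)) (1 + X Y)` then has the identity as partial derivative in `Y` at
the origin, so the analytic implicit function theorem solves it by an analytic `Y = ψ(ε)`, and
`𝓘 = 1 + X ∘ ψ`, `φ = w ∘ ψ` exhibit `ℬ` as induced from `A + D`. -/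

open Filter Topology

-- Analyticity only depends on the topology; the operator norm makes matrices a normed algebra.
attribute [local instance] Matrix.linftyOpNormedRing Matrix.linftyOpNormedAlgebra

theorem AnalyticAt.exists_implicitFunction {𝕜 E F : Type*} [RCLike 𝕜]
    [NormedAddCommGroup E] [NormedSpace 𝕜 E] [CompleteSpace E]
    [NormedAddCommGroup F] [NormedSpace 𝕜 F] [CompleteSpace F]
    {G : E × F → F} {u : E × F} (hG : AnalyticAt 𝕜 G u)
    (hG₂ : HasFDerivAt (fun y => G (u.1, y)) (ContinuousLinearMap.id 𝕜 F) u.2) :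
    ∃ ψ : E → F, AnalyticAt 𝕜 ψ u.1 ∧ ψ u.1 = u.2 ∧ ∀ᶠ x in 𝓝 u.1, G (x, ψ x) = G u := by
  have hinr : fderiv 𝕜 G u ∘L .inr 𝕜 E F = .id 𝕜 F :=
    (hG.differentiableAt.hasFDerivAt.comp u.2 (hasFDerivAt_prodMk_right u.1 u.2)).unique hG₂
  open scoped ContDiff in
  have hGω : ContDiffAt 𝕜 ω G u := hG.contDiffAt
  have hinv : (fderiv 𝕜 G u ∘L .inr 𝕜 E F).IsInvertible := hinr ▸ ⟨.refl 𝕜 F, rfl⟩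
  exact ⟨hGω.implicitFunction (by simp) hinv, (hGω.contDiffAt_implicitFunction _ _).analyticAt,
    hGω.implicitFunction_apply_self _ _, hGω.eventually_apply_implicitFunction _ _⟩

section Linearization

variable {𝕜 R E V : Type*} [NontriviallyNormedField 𝕜] [NormedRing R] [NormedAlgebra 𝕜 R]
  [NormedAddCommGroup E] [NormedSpace 𝕜 E] [NormedAddCommGroup V] [NormedSpace 𝕜 V]

theorem fderiv_mul_sub_add_mul_apply (A : R) (D : V →L[𝕜] R) {ℬ 𝓘 : E → R} {φ : E → V}
    {ℬ' 𝓘' : E →L[𝕜] R} {φ' : E →L[𝕜] V} {x : E} (hℬ : HasFDerivAt ℬ ℬ' x)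
    (h𝓘 : HasFDerivAt 𝓘 𝓘' x) (hφ : HasFDerivAt φ φ' x) (hℬx : ℬ x = A) (h𝓘x : 𝓘 x = 1)
    (hφx : φ x = 0) (v : E) :
    fderiv 𝕜 (fun ε => 𝓘 ε * ℬ ε - (A + D (φ ε)) * 𝓘 ε) x v
      = ℬ' v + 𝓘' v * A - A * 𝓘' v - D (φ' v) := by
  have hDφ : HasFDerivAt (fun ε => A + D (φ ε)) (D.comp φ') x :=
    (D.hasFDerivAt.comp x hφ).const_add A
  rw [((h𝓘.fun_mul' hℬ).fun_sub (hDφ.fun_mul' h𝓘)).fderiv]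
  simp only [h𝓘x, one_smul, hℬx, hφx, map_zero, add_zero, MulOpposite.op_one, _root_.sub_apply,
    _root_.add_apply, _root_.smul_apply, MulOpposite.smul_eq_mul_unop, MulOpposite.unop_op,
    smul_eq_mul, ContinuousLinearMap.comp_apply]
  abel

theorem hasFDerivAt_mul_sub_add_mul (A : R) (D : V →L[𝕜] R) {ℬ 𝓘 : E → R} {φ : E → V}
    {ℬ' 𝓘' L : E →L[𝕜] R} {φ' : E →L[𝕜] V} {x : E} (hℬ : HasFDerivAt ℬ ℬ' x)
    (h𝓘 : HasFDerivAt 𝓘 𝓘' x) (hφ : HasFDerivAt φ φ' x) (hℬx : ℬ x = A) (h𝓘x : 𝓘 x = 1)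
    (hφx : φ x = 0) (hL : ∀ v, L v = ℬ' v + 𝓘' v * A - A * 𝓘' v - D (φ' v)) :
    HasFDerivAt (fun ε => 𝓘 ε * ℬ ε - (A + D (φ ε)) * 𝓘 ε) L x := by
  have hdiff : DifferentiableAt 𝕜 (fun ε => 𝓘 ε * ℬ ε - (A + D (φ ε)) * 𝓘 ε) x :=
    (h𝓘.differentiableAt.mul hℬ.differentiableAt).sub
      (((D.differentiableAt.comp x hφ.differentiableAt).const_add A).mul h𝓘.differentiableAt)
  refine hdiff.hasFDerivAt.congr_fderiv (ContinuousLinearMap.ext fun v => ?_)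
  rw [fderiv_mul_sub_add_mul_apply A D hℬ h𝓘 hφ hℬx h𝓘x hφx, hL]

theorem add_mul_sub_mul_sub_eq_zero_of_eventually_mul_eq (A : R) (D : V →L[𝕜] R) {ℬ 𝓘 : E → R}
    {φ : E → V} {ℬ' 𝓘' : E →L[𝕜] R} {φ' : E →L[𝕜] V} {x : E} (hℬ : HasFDerivAt ℬ ℬ' x)
    (h𝓘 : HasFDerivAt 𝓘 𝓘' x) (hφ : HasFDerivAt φ φ' x) (hℬx : ℬ x = A) (h𝓘x : 𝓘 x = 1)
    (hφx : φ x = 0) (h : ∀ᶠ ε in 𝓝 x, 𝓘 ε * ℬ ε = (A + D (φ ε)) * 𝓘 ε) (v : E) :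
    ℬ' v + 𝓘' v * A - A * 𝓘' v - D (φ' v) = 0 := by
  rw [← fderiv_mul_sub_add_mul_apply A D hℬ h𝓘 hφ hℬx h𝓘x hφx,
    EventuallyEq.fderiv_eq (h.mono fun ε hε => sub_eq_zero.2 hε), fderiv_const_apply]
  rfl

end Linearization

namespace Matrix

variable {ι : Type*} [Fintype ι]

def orbitTangent {R : Type*} [CommRing R] (A : Matrix ι ι R) : Submodule R (Matrix ι ι R) :=
  LinearMap.range (LinearMap.mulRight R A - LinearMap.mulLeft R A)

variable [DecidableEq ι]

theorem eq_nonsing_inv_mul_mul_iff {α : Type*} [CommRing α] {P B C : Matrix ι ι α}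
    (hP : IsUnit P) : B = P⁻¹ * C * P ↔ P * B = C * P := by
  have hdet := (isUnit_iff_isUnit_det P).mp hP
  constructor
  · rintro rfl
    rw [Matrix.mul_assoc, mul_nonsing_inv_cancel_left _ _ hdet]
  · intro h
    rw [Matrix.mul_assoc, ← h, nonsing_inv_mul_cancel_left _ _ hdet]

theorem analyticAt_iff_forall_entry {𝕜 E : Type*} [NontriviallyNormedField 𝕜]
    [CompleteSpace 𝕜] [NormedAddCommGroup E] [NormedSpace 𝕜 E]
    {f : E → Matrix ι ι 𝕜} {x : E} :
    AnalyticAt 𝕜 f x ↔ ∀ i j, AnalyticAt 𝕜 (fun ε => f ε i j) x := by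
  let e : (ι → ι → 𝕜) ≃L[𝕜] Matrix ι ι 𝕜 := (ofLinearEquiv 𝕜).toContinuousLinearEquiv
  have : AnalyticAt 𝕜 f x ↔ AnalyticAt 𝕜 (e.symm ∘ f) x :=
    ⟨(e.symm.toContinuousLinearMap.analyticAt _).comp, fun h => by
      convert (e.toContinuousLinearMap.analyticAt _).comp h
      exact funext fun ε => (e.apply_symm_apply (f ε)).symm⟩
  rw [this, Function.comp_def, analyticAt_pi_iff]
  simp_rw [analyticAt_pi_iff]
  rfl

theorem exists_splitting_of_orbitTangent_sup_range_eq_top {𝕜 V : Type*}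
    [NontriviallyNormedField 𝕜] [CompleteSpace 𝕜] [NormedAddCommGroup V] [NormedSpace 𝕜 V]
    [FiniteDimensional 𝕜 V] {A : Matrix ι ι 𝕜} {D : V →ₗ[𝕜] Matrix ι ι 𝕜}
    (h : orbitTangent A ⊔ LinearMap.range D = ⊤) :
    ∃ (X : Matrix ι ι 𝕜 →L[𝕜] Matrix ι ι 𝕜) (w : Matrix ι ι 𝕜 →L[𝕜] V),
      ∀ Y, X Y * A - A * X Y - D (w Y) = Y := by
  obtain ⟨S, hS⟩ := ((LinearMap.mulRight 𝕜 A - LinearMap.mulLeft 𝕜 A).coprod (-D))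
    |>.exists_rightInverse_of_surjective (by rwa [LinearMap.range_coprod, LinearMap.range_neg])
  refine ⟨(ContinuousLinearMap.fst 𝕜 _ V).comp (LinearMap.toContinuousLinearMap S),
    (ContinuousLinearMap.snd 𝕜 _ V).comp (LinearMap.toContinuousLinearMap S), fun Y => ?_⟩
  simpa [sub_eq_add_neg] using LinearMap.congr_fun hS Y

end Matrix

section Versality

open Matrix

variable {n k : ℕ} {A : Matrix (Fin n) (Fin n) ℂ}

theorem isVersal_iff {𝒜 : (Fin k → ℂ) → Matrix (Fin n) (Fin n) ℂ} :
    IsVersal n k A 𝒜 ↔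
      ∀ (l : ℕ) (ℬ : (Fin l → ℂ) → Matrix (Fin n) (Fin n) ℂ), AnalyticAt ℂ ℬ 0 → ℬ 0 = A →
        ∃ (φ : (Fin l → ℂ) → (Fin k → ℂ)) (𝓘 : (Fin l → ℂ) → Matrix (Fin n) (Fin n) ℂ),
          AnalyticAt ℂ φ 0 ∧ φ 0 = 0 ∧ AnalyticAt ℂ 𝓘 0 ∧ 𝓘 0 = 1 ∧
          ∀ᶠ ε in 𝓝 0, IsUnit (𝓘 ε) ∧ 𝓘 ε * ℬ ε = 𝒜 (φ ε) * 𝓘 ε := by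
  simp only [IsVersal, analyticAt_iff_forall_entry, ← analyticAt_pi_iff]
  refine forall₂_congr fun l ℬ => imp_congr_right fun _ => imp_congr_right fun _ =>
    exists₂_congr fun φ 𝓘 => and_congr_right' <| and_congr_right' <| and_congr_right' <|
      and_congr_right' <| eventually_congr <| .of_forall fun ε => ?_
  exact and_congr_right eq_nonsing_inv_mul_mul_iff

variable {D : (Fin k → ℂ) →ₗ[ℂ] Matrix (Fin n) (Fin n) ℂ}

theorem IsVersal.orbitTangent_sup_range_eq_top (hv : IsVersal n k A (fun δ => A + D δ)) :
    orbitTangent A ⊔ LinearMap.range D = ⊤ := by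
  refine eq_top_iff.2 fun B _ => ?_
  let L : (Fin 1 → ℂ) →L[ℂ] Matrix (Fin n) (Fin n) ℂ := (ContinuousLinearMap.proj 0).smulRight B
  obtain ⟨φ, 𝓘, hφ, hφ0, h𝓘, h𝓘0, hconj⟩ :=
    isVersal_iff.1 hv 1 (fun ε => A + L ε) (analyticAt_const.add (L.analyticAt 0)) (by simp)
  obtain ⟨𝓘', h𝓘'⟩ := h𝓘.differentiableAt
  obtain ⟨φ', hφ'⟩ := hφ.differentiableAt
  have key : L 1 + 𝓘' 1 * A - A * 𝓘' 1 - D (φ' 1) = 0 :=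
    add_mul_sub_mul_sub_eq_zero_of_eventually_mul_eq A (LinearMap.toContinuousLinearMap D)
      (L.hasFDerivAt.const_add A) h𝓘' hφ' (by simp) h𝓘0 hφ0 (hconj.mono fun _ => And.right) 1
  have hB : B = -𝓘' 1 * A - A * -𝓘' 1 + D (φ' 1) := by
    rw [neg_mul, mul_neg, ← sub_eq_zero, ← key]
    simp only [sub_neg_eq_add, L, ContinuousLinearMap.smulRight_apply,
      ContinuousLinearMap.proj_apply, Pi.one_apply, one_smul]
    abel
  rw [hB]
  exact Submodule.add_mem_sup ⟨-𝓘' 1, rfl⟩ ⟨φ' 1, rfl⟩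

theorem isVersal_of_orbitTangent_sup_range_eq_top (h : orbitTangent A ⊔ LinearMap.range D = ⊤) :
    IsVersal n k A (fun δ => A + D δ) := by
  obtain ⟨X, w, hXw⟩ := exists_splitting_of_orbitTangent_sup_range_eq_top h
  refine isVersal_iff.2 fun l ℬ hℬ hℬ0 => ?_
  let D' := LinearMap.toContinuousLinearMap D
  let G : (Fin l → ℂ) × Matrix (Fin n) (Fin n) ℂ → Matrix (Fin n) (Fin n) ℂ :=
    fun p => (1 + X p.2) * ℬ p.1 - (A + D' (w p.2)) * (1 + X p.2)
  have hG : AnalyticAt ℂ G 0 := by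
    have hℬ₁ : AnalyticAt ℂ (fun p : (Fin l → ℂ) × Matrix (Fin n) (Fin n) ℂ => ℬ p.1) 0 :=
      hℬ.comp_of_eq analyticAt_fst rfl
    have h𝓘 : AnalyticAt ℂ (fun p : (Fin l → ℂ) × Matrix (Fin n) (Fin n) ℂ => 1 + X p.2) 0 :=
      analyticAt_const.add ((X.analyticAt _).comp analyticAt_snd)
    have h𝒜 : AnalyticAt ℂ (fun p : (Fin l → ℂ) × Matrix (Fin n) (Fin n) ℂ => A + D' (w p.2)) 0 :=
      analyticAt_const.add (((D'.comp w).analyticAt _).comp analyticAt_snd)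
    exact (h𝓘.mul hℬ₁).sub (h𝒜.mul h𝓘)
  have hG₂ : HasFDerivAt (fun Y => G (0, Y)) (ContinuousLinearMap.id ℂ _) 0 := by
    refine hasFDerivAt_mul_sub_add_mul A D' (ℬ := fun _ => ℬ 0) (hasFDerivAt_const _ _)
      (X.hasFDerivAt.const_add 1) w.hasFDerivAt hℬ0 (by simp) (by simp) fun Y => ?_
    simp only [_root_.zero_apply, zero_add]
    exact (hXw Y).symm
  obtain ⟨ψ, hψ, hψ0, hGψ⟩ := hG.exists_implicitFunction hG₂
  have hG0 : G 0 = 0 := by simp [G, hℬ0]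
  simp only [Prod.fst_zero, Prod.snd_zero, hG0] at hψ hψ0 hGψ
  have h𝓘 : AnalyticAt ℂ (fun ε => 1 + X (ψ ε)) 0 := analyticAt_const.add ((X.analyticAt _).comp hψ)
  have h𝓘0 : 1 + X (ψ 0) = 1 := by simp [hψ0]
  have hunit : ∀ᶠ ε in 𝓝 0, IsUnit (1 + X (ψ ε)) :=
    h𝓘.continuousAt.eventually_mem (h𝓘0 ▸ Units.isOpen.mem_nhds isUnit_one)
  refine ⟨fun ε => w (ψ ε), fun ε => 1 + X (ψ ε), (w.analyticAt _).comp hψ, by simp [hψ0], h𝓘,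
    h𝓘0, ?_⟩
  filter_upwards [hunit, hGψ] with ε hunit hGε
  exact ⟨hunit, sub_eq_zero.1 hGε⟩

end Versality

/-- Arnold's versality criterion: `A + D(δ)` is a versal deformation of `A` if and only if
`ℂ^{n×n} = T(A) + range D`, where `T(A) = { XA - AX }` is the tangent space to the
similarity orbit of `A` at `A`. -/
theorem isVersal_iff_tangent_sup_range (n k : ℕ) (A : Matrix (Fin n) (Fin n) ℂ)
    (D : (Fin k → ℂ) →ₗ[ℂ] Matrix (Fin n) (Fin n) ℂ) :
    IsVersal n k A (fun δ => A + D δ) ↔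
      LinearMap.range (LinearMap.mulRight ℂ A - LinearMap.mulLeft ℂ A) ⊔ LinearMap.range D
        = (⊤ : Submodule ℂ (Matrix (Fin n) (Fin n) ℂ)) :=
  ⟨IsVersal.orbitTangent_sup_range_eq_top, isVersal_of_orbitTangent_sup_range_eq_top⟩
end

section
/- Let J_can = ⊕_i ⊕_{j=1}^{t_i} J_{k_{i,j}}(λ_i) be an n×n complex matrix in Jordan canonical form, where the λ_i are pairwise distinct and k_{i,1} ≥ k_{i,2} ≥ … ≥ k_{i,t_i} for each i. Let 𝒟 ⊆ ℂ^{n×n} be the linear subspace of matrices D that are block diagonal with respect to the partition of indices by distinct eigenvalues, and whose i-th diagonal block, partitioned into sub-blocks of size k_{i,j} × k_{i,l}, has the following support: the (j,l) sub-block with j ≤ l may be nonzero only in its last row, and the (j,l) sub-block with j > l may be nonzero only in its first column. Then there exist ε > 0 and maps S : ℂ^{n×n} → ℂ^{n×n} and D : ℂ^{n×n} → 𝒟, both complex analytic on the open Frobenius-norm ball of radius ε around 0, with S(0) = I and D(0) = 0, such that for every E with ‖E‖_F < ε the matrix S(E) is invertible and S(E)⁻¹ (J_can + E) S(E) = J_can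 + D(E). -/
/-!
With `S = 1 + X`, the equation `(J + E) S = S (J + D)` linearises to `J X - X J - D = -E`. Once
`(X, D) ↦ J X - X J + D` maps matrices × `𝒟` onto all matrices, a linear right inverse
`W ↦ (X W, D W)` reduces the problem to an equation in `(E, W)` whose derivative in `W` at the
origin is the identity, and the analytic implicit function theorem gives `W(E)`.

Surjectivity is checked block by block, with `N` the nilpotent Jordan block. For `μ ≠ ν`,
`J_μ X - X J_ν = (μ - ν + N) X - X N` and `μ - ν + N` is invertible, so
`X = ∑ (μ - ν + N)⁻¹^(s+1) Y N^s` telescopes to a solution. For `μ = ν` the same series with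
`Nᵀ` in place of the inverse solves it up to an error in the last row, since `N Nᵀ` is the
identity except at the last diagonal entry; the mirror series `∑ N^s Y (Nᵀ)^(s+1)` leaves an
error in the first column instead.
-/

open Matrix

attribute [local instance] Matrix.frobeniusNormedAddCommGroup Matrix.frobeniusNormedSpace

/-- Index set for a Jordan canonical form with distinct eigenvalues indexed by `Fin p`,
`t i` Jordan blocks for the `i`-th eigenvalue, the `j`-th of which has size `k i j`. -/
abbrev JordanIdx (p : ℕ) (t : Fin p → ℕ) (k : (i : Fin p) → Fin (t i) → ℕ) : Type :=
  Σ i : Fin p, Σ j : Fin (t i), Fin (k i j)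

/-- The Jordan canonical form `⊕_i ⊕_j J_{k i j} (lam i)`. -/
def Jcan (p : ℕ) (lam : Fin p → ℂ) (t : Fin p → ℕ) (k : (i : Fin p) → Fin (t i) → ℕ) :
    Matrix (JordanIdx p t k) (JordanIdx p t k) ℂ :=
  Matrix.of fun x y =>
    if x.1 = y.1 ∧ (x.2.1 : ℕ) = (y.2.1 : ℕ) then
      (if (y.2.2 : ℕ) = (x.2.2 : ℕ) then lam x.1
       else if (y.2.2 : ℕ) = (x.2.2 : ℕ) + 1 then 1 else 0)
    else 0

/-- The linear subspace `𝒟` of matrices supported as in Arnold's miniversal deformation of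
the Jordan canonical form: block diagonal with respect to the distinct eigenvalues, and
within the `i`-th diagonal block, the `(j,l)` sub-block (of size `k i j × k i l`) may be
nonzero only in its last row if `j ≤ l`, and only in its first column if `j > l`. -/
def arnoldSpace (p : ℕ) (t : Fin p → ℕ) (k : (i : Fin p) → Fin (t i) → ℕ) :
    Set (Matrix (JordanIdx p t k) (JordanIdx p t k) ℂ) :=
  {D | ∀ x y : JordanIdx p t k, D x y ≠ 0 →
    x.1 = y.1 ∧
    ((x.2.1 : ℕ) ≤ (y.2.1 : ℕ) → (x.2.2 : ℕ) = k x.1 x.2.1 - 1) ∧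
    ((y.2.1 : ℕ) < (x.2.1 : ℕ) → (y.2.2 : ℕ) = 0)}

namespace Matrix

section Sylvester

variable {R : Type*} [Ring R] {m n : Type*} [Fintype m] [DecidableEq m] [Fintype n] [DecidableEq n]

theorem mul_sum_sub_sum_mul_of_mul_eq_one_sub {A A' P : Matrix m m R} {B : Matrix n n R}
    (hA : A * A' = 1 - P) {K : ℕ} (hB : B ^ K = 0) (Y : Matrix m n R) :
    A * (∑ s ∈ Finset.range K, A' ^ (s + 1) * Y * B ^ s) -
        (∑ s ∈ Finset.range K, A' ^ (s + 1) * Y * B ^ s) * B =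
      Y - P * ∑ s ∈ Finset.range K, A' ^ s * Y * B ^ s := by
  set T : ℕ → Matrix m n R := fun s => A' ^ s * Y * B ^ s
  have hleft (s : ℕ) : A * (A' ^ (s + 1) * Y * B ^ s) = T s - P * T s := by
    rw [← Matrix.one_mul (T s), ← Matrix.mul_assoc P, ← Matrix.sub_mul, Matrix.mul_one, ← hA]
    simp only [T, pow_succ', Matrix.mul_assoc]
  have hright (s : ℕ) : A' ^ (s + 1) * Y * B ^ s * B = T (s + 1) := by
    simp only [T, pow_succ, Matrix.mul_assoc]
  simp only [Matrix.mul_sum, Matrix.sum_mul, hleft, hright, Finset.sum_sub_distrib]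
  rw [sub_right_comm, ← Finset.sum_sub_distrib, Finset.sum_range_sub']
  simp [T, hB]

theorem sum_mul_sub_mul_sum_of_mul_eq_one_sub {A : Matrix m m R} {B B' Q : Matrix n n R}
    (hB : B' * B = 1 - Q) {K : ℕ} (hA : A ^ K = 0) (Y : Matrix m n R) :
    (∑ s ∈ Finset.range K, A ^ s * Y * B' ^ (s + 1)) * B -
        A * ∑ s ∈ Finset.range K, A ^ s * Y * B' ^ (s + 1) =
      Y - (∑ s ∈ Finset.range K, A ^ s * Y * B' ^ s) * Q := by
  set T : ℕ → Matrix m n R := fun s => A ^ s * Y * B' ^ s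
  have hright (s : ℕ) : A ^ s * Y * B' ^ (s + 1) * B = T s - T s * Q := by
    rw [← Matrix.mul_one (T s), Matrix.mul_assoc _ 1, ← Matrix.mul_sub, Matrix.one_mul, ← hB]
    simp only [T, pow_succ, Matrix.mul_assoc]
  have hleft (s : ℕ) : A * (A ^ s * Y * B' ^ (s + 1)) = T (s + 1) := by
    simp only [T, pow_succ', Matrix.mul_assoc]
  simp only [Matrix.mul_sum, Matrix.sum_mul, hleft, hright, Finset.sum_sub_distrib]
  rw [sub_right_comm, ← Finset.sum_sub_distrib, Finset.sum_range_sub']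
  simp [T, hA]

end Sylvester

section JordanShift

theorem _root_.Fin.sum_ite_val_eq {M : Type*} [AddCommMonoid M] {n : ℕ} (a : ℕ) (f : Fin n → M) :
    ∑ z : Fin n, (if (z : ℕ) = a then f z else 0) = if h : a < n then f ⟨a, h⟩ else 0 := by
  split_ifs with h
  · rw [Fintype.sum_eq_single ⟨a, h⟩ fun z hz => if_neg fun hza => hz (Fin.ext hza), if_pos rfl]
  · exact Finset.sum_eq_zero fun z _ => if_neg fun hza => h (by omega)

def jordanShift (R : Type*) [Zero R] [One R] (n : ℕ) : Matrix (Fin n) (Fin n) R :=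
  of fun r c => if (c : ℕ) = r + 1 then 1 else 0

variable {R : Type*}

theorem jordanShift_pow_apply [Semiring R] {n : ℕ} (m : ℕ) (r c : Fin n) :
    (jordanShift R n ^ m) r c = if (c : ℕ) = r + m then 1 else 0 := by
  induction m generalizing c with
  | zero => simp [one_apply, Fin.ext_iff, eq_comm]
  | succ m ih =>
    rw [pow_succ, mul_apply]
    simp only [ih]
    simp only [jordanShift, of_apply, ite_mul, one_mul, zero_mul, Fin.sum_ite_val_eq]
    split_ifs <;> first | rfl | omega

theorem jordanShift_pow_self [Semiring R] (n : ℕ) : jordanShift R n ^ n = 0 := by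
  ext r c
  rw [jordanShift_pow_apply, if_neg (by omega), zero_apply]

theorem jordanShift_mul_transpose [Ring R] (n : ℕ) :
    jordanShift R n * (jordanShift R n)ᵀ =
      1 - diagonal fun r : Fin n => if (r : ℕ) = n - 1 then 1 else 0 := by
  ext r c
  simp only [mul_apply, transpose_apply, jordanShift, of_apply, ite_mul, one_mul, zero_mul,
    Fin.sum_ite_val_eq, sub_apply, one_apply, diagonal_apply, Fin.ext_iff]
  split_ifs <;> first | omega | simp

theorem transpose_mul_jordanShift [Ring R] (n : ℕ) :
    (jordanShift R n)ᵀ * jordanShift R n =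
      1 - diagonal fun c : Fin n => if (c : ℕ) = 0 then 1 else 0 := by
  ext r c
  have hpred (z : Fin n) : (r : ℕ) = z + 1 ↔ (z : ℕ) = r - 1 ∧ 0 < (r : ℕ) := by omega
  simp only [mul_apply, transpose_apply, jordanShift, of_apply, hpred, ite_and, ite_mul, one_mul,
    zero_mul, Fin.sum_ite_val_eq, sub_apply, one_apply, diagonal_apply, Fin.ext_iff]
  split_ifs <;> first | omega | simp

end JordanShift

section JordanBlockSylvester

variable {R : Type*} [CommRing R] {a b : ℕ}

theorem jordanBlock_mul_sub_mul_jordanBlock (μ ν : R) (X : Matrix (Fin a) (Fin b) R) :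
    (μ • 1 + jordanShift R a) * X - X * (ν • 1 + jordanShift R b) =
      ((μ - ν) • 1 + jordanShift R a) * X - X * jordanShift R b := by
  simp only [Matrix.add_mul, Matrix.mul_add, Matrix.smul_mul, Matrix.mul_smul, Matrix.one_mul,
    Matrix.mul_one, sub_smul, Matrix.sub_mul]
  abel

theorem exists_jordanBlock_sylvester_of_isUnit {μ ν : R} (h : IsUnit (μ - ν))
    (Y : Matrix (Fin a) (Fin b) R) :
    ∃ X : Matrix (Fin a) (Fin b) R,
      (μ • 1 + jordanShift R a) * X - X * (ν • 1 + jordanShift R b) = Y := by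
  have hscalar : IsUnit ((μ - ν) • (1 : Matrix (Fin a) (Fin a) R)) := by
    simpa [Algebra.algebraMap_eq_smul_one] using h.map (algebraMap R (Matrix (Fin a) (Fin a) R))
  have hA : IsUnit ((μ - ν) • (1 : Matrix (Fin a) (Fin a) R) + jordanShift R a) :=
    IsNilpotent.isUnit_add_left_of_commute ⟨a, jordanShift_pow_self a⟩ hscalar
      ((Commute.one_right _).smul_right _)
  have h := mul_sum_sub_sum_mul_of_mul_eq_one_sub (hA.mul_val_inv.trans (sub_zero 1).symm)
    (jordanShift_pow_self b) Y
  rw [Matrix.zero_mul, sub_zero] at h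
  exact ⟨_, (jordanBlock_mul_sub_mul_jordanBlock μ ν _).trans h⟩

theorem exists_jordanBlock_sylvester_add_lastRow (μ : R) (Y : Matrix (Fin a) (Fin b) R) :
    ∃ X D : Matrix (Fin a) (Fin b) R, (∀ r c, D r c ≠ 0 → (r : ℕ) = a - 1) ∧
      (μ • 1 + jordanShift R a) * X - X * (μ • 1 + jordanShift R b) + D = Y := by
  have h := mul_sum_sub_sum_mul_of_mul_eq_one_sub (jordanShift_mul_transpose a)
    (jordanShift_pow_self b) Y
  refine ⟨_, _, fun r c hD => ?_, by
    rw [jordanBlock_mul_sub_mul_jordanBlock, sub_self, zero_smul, zero_add, h, sub_add_cancel]⟩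
  rw [diagonal_mul] at hD
  by_contra hr
  exact hD (by rw [if_neg hr, zero_mul])

theorem exists_jordanBlock_sylvester_add_firstCol (μ : R) (Y : Matrix (Fin a) (Fin b) R) :
    ∃ X D : Matrix (Fin a) (Fin b) R, (∀ r c, D r c ≠ 0 → (c : ℕ) = 0) ∧
      (μ • 1 + jordanShift R a) * X - X * (μ • 1 + jordanShift R b) + D = Y := by
  have h := sum_mul_sub_mul_sum_of_mul_eq_one_sub (transpose_mul_jordanShift b)
    (jordanShift_pow_self a) Y
  refine ⟨-_, _, fun r c hD => ?_, by
    rw [jordanBlock_mul_sub_mul_jordanBlock, sub_self, zero_smul, zero_add, Matrix.mul_neg,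
      Matrix.neg_mul, sub_neg_eq_add, neg_add_eq_sub, h, sub_add_cancel]⟩
  rw [mul_diagonal] at hD
  by_contra hc
  exact hD (by rw [if_neg hc, mul_zero])

end JordanBlockSylvester
end Matrix

section JordanCanonicalForm

variable {p : ℕ} {t : Fin p → ℕ} {k : (i : Fin p) → Fin (t i) → ℕ}

def jordanSubblock {α : Type*} (X : Matrix (JordanIdx p t k) (JordanIdx p t k) α)
    (β β' : Σ i, Fin (t i)) : Matrix (Fin (k β.1 β.2)) (Fin (k β'.1 β'.2)) α :=
  of fun r c => X ⟨β.1, β.2, r⟩ ⟨β'.1, β'.2, c⟩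

theorem jordanSubblock_ext {α : Type*} {X Y : Matrix (JordanIdx p t k) (JordanIdx p t k) α}
    (h : ∀ β β', jordanSubblock X β β' = jordanSubblock Y β β') : X = Y := by
  ext ⟨i, j, r⟩ ⟨i', l, c⟩
  exact congr_fun₂ (h ⟨i, j⟩ ⟨i', l⟩) r c

theorem jordanSubblock_add {α : Type*} [Add α] (X Y : Matrix (JordanIdx p t k) (JordanIdx p t k) α)
    (β β' : Σ i, Fin (t i)) :
    jordanSubblock (X + Y) β β' = jordanSubblock X β β' + jordanSubblock Y β β' :=
  rfl

theorem jordanSubblock_sub {α : Type*} [Sub α] (X Y : Matrix (JordanIdx p t k) (JordanIdx p t k) α)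
    (β β' : Σ i, Fin (t i)) :
    jordanSubblock (X - Y) β β' = jordanSubblock X β β' - jordanSubblock Y β β' :=
  rfl

variable (lam : Fin p → ℂ)

theorem Jcan_apply_of_ne {i i' : Fin p} {j : Fin (t i)} {j' : Fin (t i')}
    (h : (⟨i, j⟩ : Σ i, Fin (t i)) ≠ ⟨i', j'⟩) (r : Fin (k i j)) (c : Fin (k i' j')) :
    Jcan p lam t k ⟨i, j, r⟩ ⟨i', j', c⟩ = 0 := by
  rw [Jcan, of_apply, if_neg]
  dsimp only
  rintro ⟨rfl, hj⟩
  exact h (by rw [Fin.ext hj])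

theorem Jcan_apply_self (i : Fin p) (j : Fin (t i)) (r c : Fin (k i j)) :
    Jcan p lam t k ⟨i, j, r⟩ ⟨i, j, c⟩ = (lam i • 1 + jordanShift ℂ (k i j)) r c := by
  simp only [Jcan, jordanShift, of_apply, Matrix.add_apply, Matrix.smul_apply, one_apply,
    Fin.ext_iff, true_and, smul_eq_mul]
  split_ifs <;> first | omega | simp

theorem jordanSubblock_Jcan_mul (X : Matrix (JordanIdx p t k) (JordanIdx p t k) ℂ)
    (β β' : Σ i, Fin (t i)) :
    jordanSubblock (Jcan p lam t k * X) β β' =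
      (lam β.1 • 1 + jordanShift ℂ (k β.1 β.2)) * jordanSubblock X β β' := by
  obtain ⟨i, j⟩ := β
  ext r c
  simp only [jordanSubblock, of_apply, mul_apply, Fintype.sum_sigma]
  rw [Finset.sum_eq_single i, Finset.sum_eq_single j]
  · simp only [Jcan_apply_self]
  · intro j' _ hj
    exact Finset.sum_eq_zero fun c' _ => by
      rw [Jcan_apply_of_ne lam (by simp [Ne.symm hj]), zero_mul]
  · simp
  · intro i' _ hi
    exact Finset.sum_eq_zero fun ⟨j', _⟩ _ => Finset.sum_eq_zero fun c' _ => by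
      rw [Jcan_apply_of_ne lam (by simp [Ne.symm hi]), zero_mul]
  · simp

theorem jordanSubblock_mul_Jcan (X : Matrix (JordanIdx p t k) (JordanIdx p t k) ℂ)
    (β β' : Σ i, Fin (t i)) :
    jordanSubblock (X * Jcan p lam t k) β β' =
      jordanSubblock X β β' * (lam β'.1 • 1 + jordanShift ℂ (k β'.1 β'.2)) := by
  obtain ⟨i, j⟩ := β'
  ext r c
  simp only [jordanSubblock, of_apply, mul_apply, Fintype.sum_sigma]
  rw [Finset.sum_eq_single i, Finset.sum_eq_single j]
  · simp only [Jcan_apply_self]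
  · intro j' _ hj
    exact Finset.sum_eq_zero fun c' _ => by
      rw [Jcan_apply_of_ne lam (by simp [hj]), mul_zero]
  · simp
  · intro i' _ hi
    exact Finset.sum_eq_zero fun ⟨j', _⟩ _ => Finset.sum_eq_zero fun c' _ => by
      rw [Jcan_apply_of_ne lam (by simp [hi]), mul_zero]
  · simp

theorem exists_jordanSubblock_solution (hlam : Function.Injective lam) (β β' : Σ i, Fin (t i))
    (Y : Matrix (Fin (k β.1 β.2)) (Fin (k β'.1 β'.2)) ℂ) :
    ∃ X D : Matrix (Fin (k β.1 β.2)) (Fin (k β'.1 β'.2)) ℂ,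
      (∀ r c, D r c ≠ 0 → β.1 = β'.1 ∧ ((β.2 : ℕ) ≤ β'.2 → (r : ℕ) = k β.1 β.2 - 1) ∧
        ((β'.2 : ℕ) < β.2 → (c : ℕ) = 0)) ∧
      (lam β.1 • 1 + jordanShift ℂ _) * X - X * (lam β'.1 • 1 + jordanShift ℂ _) + D = Y := by
  obtain ⟨i, j⟩ := β
  obtain ⟨i', l⟩ := β'
  by_cases hi : i = i'
  · subst hi
    by_cases hjl : (j : ℕ) ≤ l
    · obtain ⟨X, D, hD, hXD⟩ := exists_jordanBlock_sylvester_add_lastRow (lam i) Y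
      exact ⟨X, D, fun r c h => ⟨rfl, fun _ => hD r c h, fun h' => by dsimp only at h'; omega⟩,
        hXD⟩
    · obtain ⟨X, D, hD, hXD⟩ := exists_jordanBlock_sylvester_add_firstCol (lam i) Y
      exact ⟨X, D, fun r c h => ⟨rfl, fun h' => by dsimp only at h'; omega, fun _ => hD r c h⟩,
        hXD⟩
  · obtain ⟨X, hX⟩ := exists_jordanBlock_sylvester_of_isUnit
      (sub_ne_zero.2 fun h => hi (hlam h)).isUnit Y
    exact ⟨X, 0, fun r c h => absurd rfl h, (add_zero _).trans hX⟩

theorem exists_Jcan_commutator_add_mem_arnoldSpace (hlam : Function.Injective lam)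
    (Y : Matrix (JordanIdx p t k) (JordanIdx p t k) ℂ) :
    ∃ X, ∃ D ∈ arnoldSpace p t k, Jcan p lam t k * X - X * Jcan p lam t k + D = Y := by
  choose XB DB hDB hXDB using fun β β' =>
    exists_jordanSubblock_solution lam hlam β β' (jordanSubblock Y β β')
  let X : Matrix (JordanIdx p t k) (JordanIdx p t k) ℂ :=
    of fun x y => XB ⟨x.1, x.2.1⟩ ⟨y.1, y.2.1⟩ x.2.2 y.2.2
  let D : Matrix (JordanIdx p t k) (JordanIdx p t k) ℂ :=
    of fun x y => DB ⟨x.1, x.2.1⟩ ⟨y.1, y.2.1⟩ x.2.2 y.2.2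
  refine ⟨X, D, fun ⟨i, j, r⟩ ⟨i', l, c⟩ h => hDB ⟨i, j⟩ ⟨i', l⟩ r c h,
    jordanSubblock_ext fun β β' => ?_⟩
  rw [jordanSubblock_add, jordanSubblock_sub, jordanSubblock_Jcan_mul, jordanSubblock_mul_Jcan]
  exact hXDB β β'

def arnoldSubmodule (p : ℕ) (t : Fin p → ℕ) (k : (i : Fin p) → Fin (t i) → ℕ) :
    Submodule ℂ (Matrix (JordanIdx p t k) (JordanIdx p t k) ℂ) where
  carrier := arnoldSpace p t k
  add_mem' {D D'} hD hD' x y h := by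
    by_cases hx : D x y = 0
    · exact hD' x y (by simpa [hx] using h)
    · exact hD x y hx
  zero_mem' x y h := absurd rfl h
  smul_mem' a D hD x y h := hD x y (right_ne_zero_of_mul h)

end JordanCanonicalForm

open Topology
open scoped ContDiff

section AnalyticNormalForm

variable {A : Type*} [NormedRing A] [NormedAlgebra ℂ A]

theorem exists_analytic_intertwiner_of_rightInverse [CompleteSpace A] (J : A) (Rx Rd : A →L[ℂ] A)
    (hR : ∀ W, J * Rx W - Rx W * J + Rd W = W) :
    ∃ w : A → A, w 0 = 0 ∧ ∀ᶠ E in 𝓝 0, AnalyticAt ℂ w E ∧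
      (J + E) * (1 + Rx (w E)) = (1 + Rx (w E)) * (J - Rd (w E)) := by
  set G : A × A → A := fun q => (J + q.1) * (1 + Rx q.2) - (1 + Rx q.2) * (J - Rd q.2)
  have hG (q : A × A) : G q = q.2 + q.1 + q.1 * Rx q.2 + Rx q.2 * Rd q.2 := by
    calc G q = (J * Rx q.2 - Rx q.2 * J + Rd q.2) + q.1 + q.1 * Rx q.2 + Rx q.2 * Rd q.2 := by
          simp only [G]; noncomm_ring
      _ = _ := by rw [hR]
  have hRx : AnalyticAt ℂ (fun q : A × A => Rx q.2) 0 := (Rx.analyticAt _).comp analyticAt_snd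
  have hRd : AnalyticAt ℂ (fun q : A × A => Rd q.2) 0 := (Rd.analyticAt _).comp analyticAt_snd
  have hGa : AnalyticAt ℂ G 0 :=
    ((analyticAt_const.add analyticAt_fst).mul (analyticAt_const.add hRx)).sub
      ((analyticAt_const.add hRx).mul (analyticAt_const.sub hRd))
  have hG' : fderiv ℂ G 0 ∘L ContinuousLinearMap.inr ℂ A A = ContinuousLinearMap.id ℂ A := by
    have hlin : HasFDerivAt (fun W => G (0, W)) (ContinuousLinearMap.id ℂ A) 0 := by
      have hfun : (fun W => G (0, W)) = fun W => W + Rx W * Rd W := funext fun W => by simp [hG]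
      rw [hfun]
      exact ((hasFDerivAt_id (0 : A)).add (Rx.hasFDerivAt.mul' Rd.hasFDerivAt)).congr_fderiv
        (by simp)
    exact (hGa.differentiableAt.hasFDerivAt.comp 0
      (ContinuousLinearMap.inr ℂ A A).hasFDerivAt).unique hlin
  have hcd : ContDiffAt ℂ ω G 0 := hGa.contDiffAt
  have hinv : (fderiv ℂ G 0 ∘L ContinuousLinearMap.inr ℂ A A).IsInvertible :=
    hG' ▸ ⟨ContinuousLinearEquiv.refl ℂ A, rfl⟩
  have hω : (ω : WithTop ℕ∞) ≠ 0 := by simp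
  refine ⟨hcd.implicitFunction hω hinv, hcd.implicitFunction_apply_self hω hinv,
    (hcd.contDiffAt_implicitFunction hω hinv).analyticAt.eventually_analyticAt.and
      ((hcd.eventually_apply_implicitFunction hω hinv).mono fun E hE => ?_)⟩
  rw [← sub_eq_zero]
  exact hE.trans (by simp [hG])

theorem exists_analytic_similarity_to_normalForm [FiniteDimensional ℂ A] (J : A)
    (V : Submodule ℂ A) (hV : ∀ Y, ∃ X, ∃ D ∈ V, J * X - X * J + D = Y) :
    ∃ ε > (0 : ℝ), ∃ S D : A → A,
      AnalyticOnNhd ℂ S (Metric.ball 0 ε) ∧ AnalyticOnNhd ℂ D (Metric.ball 0 ε) ∧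
      S 0 = 1 ∧ D 0 = 0 ∧
      ∀ E ∈ Metric.ball (0 : A) ε, D E ∈ V ∧ IsUnit (S E) ∧ (J + E) * S E = S E * (J + D E) := by
  have := FiniteDimensional.complete ℂ A
  let L : A × V →ₗ[ℂ] A := (LinearMap.mulLeft ℂ J - LinearMap.mulRight ℂ J).coprod V.subtype
  have hL : Function.Surjective L := fun Y => by
    obtain ⟨X, D, hD, hXD⟩ := hV Y
    exact ⟨(X, ⟨D, hD⟩), hXD⟩
  obtain ⟨g, hg⟩ := L.exists_rightInverse_of_surjective (LinearMap.range_eq_top.2 hL)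
  let Rx : A →L[ℂ] A := (LinearMap.fst ℂ A V ∘ₗ g).toContinuousLinearMap
  let Rd : A →L[ℂ] A := (V.subtype ∘ₗ LinearMap.snd ℂ A V ∘ₗ g).toContinuousLinearMap
  obtain ⟨w, hw0, hw⟩ :=
    exists_analytic_intertwiner_of_rightInverse J Rx Rd (LinearMap.congr_fun hg)
  let S : A → A := fun E => 1 + Rx (w E)
  have hS0 : S 0 = 1 := by simp [S, hw0]
  have hunit : ∀ᶠ E in 𝓝 0, IsUnit (S E) :=
    (analyticAt_const.add ((Rx.analyticAt _).comp hw.self_of_nhds.1)).continuousAt.eventually_mem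
      (Units.isOpen.mem_nhds (show IsUnit (S 0) from hS0 ▸ isUnit_one))
  obtain ⟨ε, hε, hball⟩ := Metric.eventually_nhds_iff_ball.1 (hw.and hunit)
  refine ⟨ε, hε, S, fun E => -Rd (w E), fun E hE => ?_, fun E hE => ?_, hS0, by simp [hw0],
    fun E hE => ⟨neg_mem (g (w E)).2.2, (hball E hE).2, ?_⟩⟩
  · exact analyticAt_const.add ((Rx.analyticAt _).comp (hball E hE).1.1)
  · exact ((Rd.analyticAt _).comp (hball E hE).1.1).neg
  · rw [← sub_eq_add_neg]
    exact (hball E hE).1.2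

end AnalyticNormalForm

theorem miniversal_deformation_of_JCF_general (p : ℕ) (lam : Fin p → ℂ)
    (hlam : Function.Injective lam) (t : Fin p → ℕ)
    (k : (i : Fin p) → Fin (t i) → ℕ) :
    ∃ ε > (0 : ℝ),
      ∃ S D : Matrix (JordanIdx p t k) (JordanIdx p t k) ℂ →
          Matrix (JordanIdx p t k) (JordanIdx p t k) ℂ,
        AnalyticOnNhd ℂ S (Metric.ball 0 ε) ∧
        AnalyticOnNhd ℂ D (Metric.ball 0 ε) ∧
        S 0 = 1 ∧ D 0 = 0 ∧
        ∀ E ∈ Metric.ball (0 : Matrix (JordanIdx p t k) (JordanIdx p t k) ℂ) ε,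
          D E ∈ arnoldSpace p t k ∧ IsUnit (S E) ∧
          (S E)⁻¹ * (Jcan p lam t k + E) * S E = Jcan p lam t k + D E := by
  let := Matrix.frobeniusNormedRing (m := JordanIdx p t k) (α := ℂ)
  let := Matrix.frobeniusNormedAlgebra (m := JordanIdx p t k) (R := ℂ) (α := ℂ)
  obtain ⟨ε, hε, S, D, hS, hD, hS0, hD0, hSD⟩ := exists_analytic_similarity_to_normalForm
    (Jcan p lam t k) (arnoldSubmodule p t k) (exists_Jcan_commutator_add_mem_arnoldSpace lam hlam)
  refine ⟨ε, hε, S, D, hS, hD, hS0, hD0, fun E hE => ?_⟩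
  obtain ⟨hDE, hSE, hconj⟩ := hSD E hE
  refine ⟨hDE, hSE, ?_⟩
  rw [Matrix.mul_assoc, hconj, ← Matrix.mul_assoc,
    Matrix.nonsing_inv_mul _ ((Matrix.isUnit_iff_isUnit_det _).1 hSE), Matrix.one_mul]

/-- Arnold's theorem: all matrices `J_can + E` sufficiently close to a Jordan canonical form
`J_can` can be reduced, by a similarity transformation `S(E)` depending holomorphically on `E`
with `S(0) = I`, to the miniversal normal form `J_can + D(E)` with `D(E) ∈ 𝒟` depending
holomorphically on `E` and `D(0) = 0`. -/
theorem miniversal_deformation_of_JCF (p : ℕ) (lam : Fin p → ℂ)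
    (hlam : Function.Injective lam) (t : Fin p → ℕ) (ht : ∀ i, 0 < t i)
    (k : (i : Fin p) → Fin (t i) → ℕ) (hk : ∀ i j, 0 < k i j)
    (hmono : ∀ (i : Fin p) (j l : Fin (t i)), j ≤ l → k i l ≤ k i j) :
    ∃ ε > (0 : ℝ),
      ∃ S D : Matrix (JordanIdx p t k) (JordanIdx p t k) ℂ →
          Matrix (JordanIdx p t k) (JordanIdx p t k) ℂ,
        AnalyticOnNhd ℂ S (Metric.ball 0 ε) ∧
        AnalyticOnNhd ℂ D (Metric.ball 0 ε) ∧
        S 0 = 1 ∧ D 0 = 0 ∧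
        ∀ E ∈ Metric.ball (0 : Matrix (JordanIdx p t k) (JordanIdx p t k) ℂ) ε,
          D E ∈ arnoldSpace p t k ∧ IsUnit (S E) ∧
          (S E)⁻¹ * (Jcan p lam t k + E) * S E = Jcan p lam t k + D E :=
  miniversal_deformation_of_JCF_general p lam hlam t k
end

section
/- Let d ≥ 1 and n ≥ 1 be integers, let P(λ) = λ^d·I_n + A_{d−1}λ^{d−1} + … + A₁λ + A₀ be a monic matrix polynomial with A_i ∈ ℂ^{n×n}, and let C_P be its linearization. Then there exists ε > 0 such that for every nd×nd complex matrix E with ‖E‖_F < ε there exist n×n complex matrices F₀, …, F_{d−1} and an invertible nd×nd matrix S with S⁻¹ (C_P + E) S = C_Q, where C_Q is the linearization of the monic matrix polynomial Q(λ) = λ^d·I_n + (A_{d−1}+F_{d−1})λ^{d−1} + … + (A₁+F₁)λ + (A₀+F₀). That is, every sufficiently small full perturbation of C_P is similar to a structured perturbation of C_P that modifies only the first block row. -/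
open Matrix

/-- The Frobenius norm of a complex matrix. -/
noncomputable def frobNorm {m n : Type*} [Fintype m] [Fintype n] (M : Matrix m n ℂ) : ℝ :=
  Real.sqrt (∑ i, ∑ j, ‖M i j‖ ^ 2)

/-- The linearization (companion-type block matrix) `C_P` of the monic matrix polynomial
`P(λ) = λ^d I_n + A_{d-1} λ^{d-1} + ⋯ + A_1 λ + A_0`: the first block row is
`(-A_{d-1}, -A_{d-2}, …, -A_0)`, the `(i+1, i)` block is `I_n` for `i = 1, …, d-1`,
and the remaining blocks are zero. -/
def linearization (d n : ℕ) (A : Fin d → Matrix (Fin n) (Fin n) ℂ) :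
    Matrix (Fin d × Fin n) (Fin d × Fin n) ℂ :=
  Matrix.of fun x y =>
    if (x.1 : ℕ) = 0 then
      -(A ⟨d - 1 - (y.1 : ℕ), by have := y.1.isLt; omega⟩ x.2 y.2)
    else if (x.1 : ℕ) = (y.1 : ℕ) + 1 then (if x.2 = y.2 then 1 else 0)
    else 0

def Wmat (d n : ℕ) (hd : 0 < d) (M : Matrix (Fin d × Fin n) (Fin d × Fin n) ℂ) :
    Matrix (Fin d × Fin n) (Fin d × Fin n) ℂ :=
  Matrix.of fun x y => (M ^ (d - 1 - (x.1 : ℕ))) (⟨d - 1, by omega⟩, x.2) y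

lemma pow_row (d n : ℕ) (hd : 0 < d) (A : Fin d → Matrix (Fin n) (Fin n) ℂ)
    (k : ℕ) (hk : k ≤ d - 1) (a : Fin n) (y : Fin d × Fin n) :
    ((linearization d n A) ^ k) (⟨d - 1, by omega⟩, a) y
      = if (y.1 : ℕ) = d - 1 - k ∧ y.2 = a then 1 else 0 := by
  induction k generalizing y with
  | zero =>
    rw [pow_zero, Matrix.one_apply, Nat.sub_zero]
    have h : ((⟨d - 1, by omega⟩ : Fin d), a) = y ↔ ((y.1 : ℕ) = d - 1 ∧ y.2 = a) := by
      rcases y with ⟨⟨j, hj⟩, b⟩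
      simp [Prod.ext_iff, Fin.ext_iff, eq_comm]
    simp [h]
  | succ k ih =>
    have hk' : k ≤ d - 1 := by omega
    rw [pow_succ, Matrix.mul_apply]
    have hcond : ∀ z : Fin d × Fin n,
        (((z.1 : ℕ) = d - 1 - k ∧ z.2 = a) ↔ z = (⟨d - 1 - k, by omega⟩, a)) := by
      rintro ⟨⟨j, hj⟩, b⟩
      simp [Prod.ext_iff, Fin.ext_iff]
    simp_rw [fun z => ih hk' z, hcond, ite_mul, one_mul, zero_mul]
    rw [Finset.sum_ite_eq' Finset.univ]
    simp only [Finset.mem_univ, if_true]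
    rcases y with ⟨⟨j, hj⟩, b⟩
    simp only [linearization, Matrix.of_apply]
    have h1 : ¬ (d - 1 - k = 0) := by omega
    rw [if_neg h1]
    by_cases h2 : d - 1 - k = j + 1
    · rw [if_pos h2]
      by_cases h3 : a = b
      · rw [if_pos h3, if_pos ⟨by omega, h3.symm⟩]
      · rw [if_neg h3, if_neg (by rintro ⟨-, hba⟩; exact h3 hba.symm)]
    · rw [if_neg h2, if_neg (by rintro ⟨hj', -⟩; omega)]

lemma W_lin (d n : ℕ) (hd : 0 < d) (A : Fin d → Matrix (Fin n) (Fin n) ℂ) :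
    Wmat d n hd (linearization d n A) = 1 := by
  ext x y
  rcases x with ⟨⟨i, hi⟩, a⟩
  rw [Wmat, Matrix.of_apply, pow_row d n hd A _ (by omega)]
  rw [Matrix.one_apply]
  rcases y with ⟨⟨j, hj⟩, b⟩
  have h : ((⟨i, hi⟩ : Fin d), a) = ((⟨j, hj⟩ : Fin d), b) ↔ (j = d - 1 - (d - 1 - i) ∧ b = a) := by
    simp [Prod.ext_iff, Fin.ext_iff, eq_comm]
    omega
  simp only [h]

lemma WM_row (d n : ℕ) (hd : 0 < d) (M : Matrix (Fin d × Fin n) (Fin d × Fin n) ℂ)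
    (i : ℕ) (hi : i < d) (hi1 : 0 < i) (a : Fin n) (y : Fin d × Fin n) :
    (Wmat d n hd M * M) ((⟨i, hi⟩ : Fin d), a) y
      = Wmat d n hd M ((⟨i - 1, by omega⟩ : Fin d), a) y := by
  rw [Matrix.mul_apply]
  simp only [Wmat, Matrix.of_apply]
  rw [← Matrix.mul_apply, ← pow_succ]
  have h : d - 1 - i + 1 = d - 1 - (i - 1) := by omega
  rw [h]

lemma cont_det (d n : ℕ) (hd : 0 < d) (L : Matrix (Fin d × Fin n) (Fin d × Fin n) ℂ) :
    Continuous fun e : (Fin d × Fin n) → (Fin d × Fin n) → ℂ =>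
      (Wmat d n hd (L + Matrix.of e)).det := by
  have hM : Continuous fun e : (Fin d × Fin n) → (Fin d × Fin n) → ℂ => L + Matrix.of e := by
    exact continuous_const.add continuous_id
  have hpow : ∀ k, Continuous fun e : (Fin d × Fin n) → (Fin d × Fin n) → ℂ =>
      (L + Matrix.of e) ^ k := by
    intro k
    induction k with
    | zero => simpa [pow_zero] using
        (continuous_const : Continuous fun _ : (Fin d × Fin n) → (Fin d × Fin n) → ℂ =>
          (1 : Matrix (Fin d × Fin n) (Fin d × Fin n) ℂ))
    | succ k ih => simpa [pow_succ] using ih.matrix_mul hM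
  apply Continuous.matrix_det
  apply continuous_matrix
  intro x y
  exact (hpow (d - 1 - (x.1 : ℕ))).matrix_elem _ _

/-- Every sufficiently small full perturbation of the linearization `C_P` of a monic matrix
polynomial `P` is similar to a structured perturbation, i.e. to the linearization `C_Q` of a
monic matrix polynomial `Q` obtained from `P` by perturbing only its matrix coefficients. -/
theorem reduction_to_structured_perturbation (d n : ℕ) (hd : 1 ≤ d) (hn : 1 ≤ n)
    (A : Fin d → Matrix (Fin n) (Fin n) ℂ) :
    ∃ ε > (0 : ℝ), ∀ E : Matrix (Fin d × Fin n) (Fin d × Fin n) ℂ, frobNorm E < ε →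
      ∃ (F : Fin d → Matrix (Fin n) (Fin n) ℂ)
        (S : Matrix (Fin d × Fin n) (Fin d × Fin n) ℂ),
        IsUnit S ∧
        S⁻¹ * (linearization d n A + E) * S = linearization d n (fun i => A i + F i) := by
  have hd0 : 0 < d := hd
  set L := linearization d n A with hLdef
  obtain ⟨δ, hδ0, hball⟩ := Metric.continuousAt_iff.mp (cont_det d n hd0 L).continuousAt 1 one_pos
  refine ⟨δ, hδ0, ?_⟩
  intro E hE
  have hle : ∀ x y, ‖E x y‖ ≤ frobNorm E := by
    intro x y
    have h1 : ‖E x y‖ ^ 2 ≤ ∑ i : Fin d × Fin n, ∑ j : Fin d × Fin n, ‖E i j‖ ^ 2 := by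
      calc ‖E x y‖ ^ 2 ≤ ∑ j : Fin d × Fin n, ‖E x j‖ ^ 2 :=
            Finset.single_le_sum (f := fun j => ‖E x j‖ ^ 2)
              (fun j _ => sq_nonneg _) (Finset.mem_univ _)
        _ ≤ ∑ i : Fin d × Fin n, ∑ j : Fin d × Fin n, ‖E i j‖ ^ 2 :=
            Finset.single_le_sum (f := fun i => ∑ j : Fin d × Fin n, ‖E i j‖ ^ 2)
              (fun i _ => Finset.sum_nonneg fun j _ => sq_nonneg _) (Finset.mem_univ _)
    have h2 := Real.sqrt_le_sqrt h1
    rw [Real.sqrt_sq (norm_nonneg _)] at h2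
    simpa [frobNorm] using h2
  have hdist : dist (fun x y => E x y) (0 : (Fin d × Fin n) → (Fin d × Fin n) → ℂ) < δ := by
    rw [dist_pi_lt_iff hδ0]
    intro x
    rw [dist_pi_lt_iff hδ0]
    intro y
    rw [Pi.zero_apply, Pi.zero_apply, dist_zero_right]
    exact lt_of_le_of_lt (hle x y) hE
  have hdet1 := hball hdist
  have h0 : (Wmat d n hd0 (L + Matrix.of (0 : (Fin d × Fin n) → (Fin d × Fin n) → ℂ))).det
      = 1 := by
    have hz : (Matrix.of (0 : (Fin d × Fin n) → (Fin d × Fin n) → ℂ)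
        : Matrix (Fin d × Fin n) (Fin d × Fin n) ℂ) = 0 := rfl
    rw [hz, add_zero, hLdef, W_lin, Matrix.det_one]
  rw [h0] at hdet1
  have hOf : (Matrix.of (fun x y => E x y) : Matrix (Fin d × Fin n) (Fin d × Fin n) ℂ) = E := rfl
  rw [hOf] at hdet1
  have hdet : (Wmat d n hd0 (L + E)).det ≠ 0 := by
    intro h
    rw [h] at hdet1
    simp at hdet1
  set W := Wmat d n hd0 (L + E) with hWdef
  have hWu : IsUnit W.det := isUnit_iff_ne_zero.mpr hdet
  set N := W * (L + E) * W⁻¹ with hN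
  set F : Fin d → Matrix (Fin n) (Fin n) ℂ := fun i => Matrix.of fun a b =>
      -(N ((⟨0, hd0⟩ : Fin d), a) ((⟨d - 1 - (i : ℕ), by omega⟩ : Fin d), b)) - A i a b with hF
  refine ⟨F, W⁻¹, ?_, ?_⟩
  · exact Matrix.isUnit_nonsing_inv_iff.mpr ((Matrix.isUnit_iff_isUnit_det W).mpr hWu)
  · rw [Matrix.nonsing_inv_nonsing_inv W hWu, ← hN]
    ext x y
    rcases x with ⟨⟨i, hi⟩, a⟩
    rcases y with ⟨⟨j, hj⟩, b⟩
    simp only [linearization, Matrix.of_apply]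
    by_cases hi0 : i = 0
    · subst hi0
      rw [if_pos rfl]
      have key : ∀ (c : Fin d), (c : ℕ) = d - 1 - j →
          -((A c + F c) a b) = N ((⟨0, hd0⟩ : Fin d), a) ((⟨j, hj⟩ : Fin d), b) := by
        intro c hc
        have h2 : (⟨d - 1 - (c : ℕ), by omega⟩ : Fin d) = (⟨j, hj⟩ : Fin d) := by
          apply Fin.ext
          simp
          omega
        simp only [hF, Matrix.add_apply, Matrix.of_apply, h2]
        ring
      rw [← key ⟨d - 1 - j, by omega⟩ rfl]
    · rw [if_neg (by simpa using hi0)]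
      have h1 : ∀ z, (W * (L + E)) ((⟨i, hi⟩ : Fin d), a) z
          = W ((⟨i - 1, by omega⟩ : Fin d), a) z :=
        fun z => WM_row d n hd0 (L + E) i hi (by omega) a z
      have h2 : N ((⟨i, hi⟩ : Fin d), a) ((⟨j, hj⟩ : Fin d), b)
          = (1 : Matrix (Fin d × Fin n) (Fin d × Fin n) ℂ)
              ((⟨i - 1, by omega⟩ : Fin d), a) ((⟨j, hj⟩ : Fin d), b) := by
        rw [hN, Matrix.mul_apply]
        simp_rw [h1]
        rw [← Matrix.mul_apply, Matrix.mul_nonsing_inv W hWu]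
      rw [h2, Matrix.one_apply]
      simp only [Prod.mk.injEq, Fin.mk.injEq]
      have hv : i - 1 = j ↔ i = j + 1 := by omega
      simp only [hv]
      by_cases hab : a = b <;> by_cases hij : i = j + 1 <;> simp [hab, hij]
end

section
/- Let λ ∈ ℂ and δ ∈ ℂ with δ ≠ 0, and let M be the 5×5 complex matrix J₃(λ) ⊕ J₂(λ) + δ·E_{3,5}, where E_{3,5} is the matrix unit with 1 in position (3,5) and 0 elsewhere. Then M is similar to J₄(λ) ⊕ J₁(λ). -/
open Matrix

/-- Perturbing `J₃(λ) ⊕ J₂(λ)` by `δ` in position `(3,5)` (1-indexed) yields a matrix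
similar to `J₄(λ) ⊕ J₁(λ)` whenever `δ ≠ 0`. -/
theorem perturbed_J3_J2_similar_J4_J1 (lam δ : ℂ) (hδ : δ ≠ 0) :
    ∃ S : Matrix (Fin 5) (Fin 5) ℂ, IsUnit S ∧
      S⁻¹ * !![lam, 1, 0, 0, 0;
               0, lam, 1, 0, 0;
               0, 0, lam, 0, δ;
               0, 0, 0, lam, 1;
               0, 0, 0, 0, lam] * S =
        !![lam, 1, 0, 0, 0;
           0, lam, 1, 0, 0;
           0, 0, lam, 1, 0;
           0, 0, 0, lam, 0;
           0, 0, 0, 0, lam] := by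
  set S : Matrix (Fin 5) (Fin 5) ℂ :=
    !![δ, 0, 0, 0, 0;
       0, δ, 0, 0, 0;
       0, 0, δ, 0, 0;
       0, 0, 1, 0, 1;
       0, 0, 0, 1, 0] with hS
  have hdet : S.det = -δ ^ 3 := by
    simp [hS, Matrix.det_succ_row_zero, Fin.sum_univ_succ]
    ring
  have hUnit : IsUnit S := by
    rw [Matrix.isUnit_iff_isUnit_det, hdet]
    exact (IsUnit.neg_iff _).mpr ((hδ.isUnit).pow 3)
  refine ⟨S, hUnit, ?_⟩
  have hmul :
      (!![lam, 1, 0, 0, 0;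
         0, lam, 1, 0, 0;
         0, 0, lam, 0, δ;
         0, 0, 0, lam, 1;
         0, 0, 0, 0, lam] : Matrix (Fin 5) (Fin 5) ℂ) * S =
      S * !![lam, 1, 0, 0, 0;
             0, lam, 1, 0, 0;
             0, 0, lam, 1, 0;
             0, 0, 0, lam, 0;
             0, 0, 0, 0, lam] := by
    ext i j
    fin_cases i <;> fin_cases j <;>
      (simp [hS, Matrix.mul_apply, Fin.sum_univ_succ]; try ring)
  rw [Matrix.mul_assoc, hmul, ← Matrix.mul_assoc,
    Matrix.nonsing_inv_mul S (Matrix.isUnit_iff_isUnit_det S |>.mp hUnit), Matrix.one_mul]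
end

section
/- Let λ ∈ ℂ and δ ∈ ℂ with δ ≠ 0, and let M be the 5×5 complex matrix J₃(λ) ⊕ J₂(λ) + δ·E_{3,1}, where E_{3,1} is the matrix unit with 1 in position (3,1) and 0 elsewhere. Then there exist pairwise distinct complex numbers μ₁, μ₂, μ₃, each different from λ, such that M is similar to diag(μ₁, μ₂, μ₃) ⊕ J₂(λ). -/
open Matrix

/-!
Up to the shift by `λ`, the upper `3 × 3` block is the companion matrix of `X ^ 3 - δ`, so every
cube root `t` of `δ` gives the eigenvector `(1, t, t ^ 2)`. Since `δ ≠ 0`, its three cube roots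
`c, ω c, ω ^ 2 c` (with `ω` a primitive cube root of unity) are distinct and nonzero, and the
corresponding Vandermonde matrix, extended by the identity on the `J₂(λ)` block, conjugates the
matrix to the required normal form.
-/

lemma exists_three_distinct_cube_roots {δ : ℂ} (hδ : δ ≠ 0) :
    ∃ t₁ t₂ t₃ : ℂ, t₁ ≠ t₂ ∧ t₁ ≠ t₃ ∧ t₂ ≠ t₃ ∧ t₁ ^ 3 = δ ∧ t₂ ^ 3 = δ ∧ t₃ ^ 3 = δ := by
  obtain ⟨c, hc⟩ := IsAlgClosed.exists_pow_nat_eq δ (n := 3) (by norm_num)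
  have hc0 : c ≠ 0 := by rintro rfl; exact hδ (by simp [← hc])
  obtain ⟨ω, hω⟩ : ∃ ω : ℂ, IsPrimitiveRoot ω 3 := ⟨_, Complex.isPrimitiveRoot_exp 3 (by norm_num)⟩
  have hcube (i : ℕ) : (ω ^ i * c) ^ 3 = δ := by
    rw [mul_pow, ← pow_mul, mul_comm i, pow_mul, hω.pow_eq_one, one_pow, one_mul, hc]
  have hne {i j : ℕ} (hi : i < 3) (hj : j < 3) (hij : i ≠ j) : ω ^ i * c ≠ ω ^ j * c :=
    fun h ↦ hij (hω.pow_inj hi hj (mul_right_cancel₀ hc0 h))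
  exact ⟨ω ^ 0 * c, ω ^ 1 * c, ω ^ 2 * c, hne (by norm_num) (by norm_num) (by norm_num),
    hne (by norm_num) (by norm_num) (by norm_num), hne (by norm_num) (by norm_num) (by norm_num),
    hcube 0, hcube 1, hcube 2⟩

section

variable {K : Type*} [CommRing K]

def vandermondeBlock (t₁ t₂ t₃ : K) : Matrix (Fin 5) (Fin 5) K :=
  !![1, 1, 1, 0, 0;
     t₁, t₂, t₃, 0, 0;
     t₁ ^ 2, t₂ ^ 2, t₃ ^ 2, 0, 0;
     0, 0, 0, 1, 0;
     0, 0, 0, 0, 1]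

lemma det_vandermondeBlock (t₁ t₂ t₃ : K) :
    (vandermondeBlock t₁ t₂ t₃).det = (t₂ - t₁) * (t₃ - t₁) * (t₃ - t₂) := by
  simp [vandermondeBlock, det_succ_row_zero, Fin.sum_univ_succ, Fin.succAbove]
  ring

lemma perturbed_mul_vandermondeBlock (lam δ : K) {t₁ t₂ t₃ : K}
    (h₁ : t₁ ^ 3 = δ) (h₂ : t₂ ^ 3 = δ) (h₃ : t₃ ^ 3 = δ) :
    !![lam, 1, 0, 0, 0;
       0, lam, 1, 0, 0;
       δ, 0, lam, 0, 0;
       0, 0, 0, lam, 1;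
       0, 0, 0, 0, lam] * vandermondeBlock t₁ t₂ t₃ =
      vandermondeBlock t₁ t₂ t₃ * !![lam + t₁, 0, 0, 0, 0;
                                     0, lam + t₂, 0, 0, 0;
                                     0, 0, lam + t₃, 0, 0;
                                     0, 0, 0, lam, 1;
                                     0, 0, 0, 0, lam] := by
  ext i j
  fin_cases i <;> fin_cases j <;>
    simp [vandermondeBlock, mul_apply, Fin.sum_univ_five] <;>
    first | ring1 | linear_combination -h₁ | linear_combination -h₂ | linear_combination -h₃

end

/-- Perturbing `J₃(λ) ⊕ J₂(λ)` by `δ` in position `(3,1)` (1-indexed) with `δ ≠ 0` yields a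
matrix similar to `diag(μ₁, μ₂, μ₃) ⊕ J₂(λ)` for some pairwise distinct `μ₁, μ₂, μ₃`,
each different from `λ`. -/
theorem perturbed_J3_J2_similar_diag_J2 (lam δ : ℂ) (hδ : δ ≠ 0) :
    ∃ μ₁ μ₂ μ₃ : ℂ, μ₁ ≠ μ₂ ∧ μ₁ ≠ μ₃ ∧ μ₂ ≠ μ₃ ∧
      μ₁ ≠ lam ∧ μ₂ ≠ lam ∧ μ₃ ≠ lam ∧
      ∃ S : Matrix (Fin 5) (Fin 5) ℂ, IsUnit S ∧
        S⁻¹ * !![lam, 1, 0, 0, 0;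
                 0, lam, 1, 0, 0;
                 δ, 0, lam, 0, 0;
                 0, 0, 0, lam, 1;
                 0, 0, 0, 0, lam] * S =
          !![μ₁, 0, 0, 0, 0;
             0, μ₂, 0, 0, 0;
             0, 0, μ₃, 0, 0;
             0, 0, 0, lam, 1;
             0, 0, 0, 0, lam] := by
  obtain ⟨t₁, t₂, t₃, h₁₂, h₁₃, h₂₃, h₁, h₂, h₃⟩ := exists_three_distinct_cube_roots hδ
  have hne {t : ℂ} (ht : t ^ 3 = δ) : lam + t ≠ lam := by simpa using (ht ▸ hδ : t ^ 3 ≠ 0)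
  have hdet : IsUnit (vandermondeBlock t₁ t₂ t₃).det := by
    rw [det_vandermondeBlock]
    exact Ne.isUnit (by simp [sub_eq_zero, h₁₂.symm, h₁₃.symm, h₂₃.symm])
  refine ⟨lam + t₁, lam + t₂, lam + t₃, by simpa, by simpa, by simpa, hne h₁, hne h₂, hne h₃,
    vandermondeBlock t₁ t₂ t₃, (isUnit_iff_isUnit_det _).mpr hdet, ?_⟩
  rw [mul_assoc, perturbed_mul_vandermondeBlock lam δ h₁ h₂ h₃,
    nonsing_inv_mul_cancel_left _ _ hdet]
end
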